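/- arXiv:1803.11101 — 2 statements merged into one kernel-verified Lean document; each statement's English description precedes it below -/
import Mathlib

section
/- Let D be a self-adjoint operator on a Hilbert space H and M a bounded operator preserving dom(D) such that [D,M] extends to a bounded operator B. If for some λ ∉ spec(D) the operator B ∘ R_D(λ) is compact, then [R_D(λ), M] is compact. -/
open ContinuousLinearMap

/-- `R` is the resolvent `(λ - D)⁻¹` of the (possibly unbounded) operator `D`:
it is a two-sided bounded inverse of `λ - D`. -/
def IsResolventAt {H : Type*} [NormedAddCommGroup H] [InnerProductSpace ℂ H] [CompleteSpace H]
    (D : H →ₗ.[ℂ] H) (lam : ℂ) (R : H →L[ℂ] H) : Prop :=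
  (∀ y : H, R y ∈ D.domain) ∧
    (∀ y : H, ∀ h : R y ∈ D.domain, lam • R y - D ⟨R y, h⟩ = y) ∧
    (∀ x : D.domain, R (lam • (x : H) - D x) = (x : H))

theorem statement9 {H : Type*} [NormedAddCommGroup H] [InnerProductSpace ℂ H] [CompleteSpace H]
    (D : H →ₗ.[ℂ] H) (hsa : IsSelfAdjoint D)
    (M : H →L[ℂ] H) (hM : ∀ x ∈ D.domain, M x ∈ D.domain)
    (B : H →L[ℂ] H)
    (hB : ∀ x : D.domain, B (x : H) = D ⟨M (x : H), hM (x : H) x.2⟩ - M (D x))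
    (lam : ℂ) (R : H →L[ℂ] H) (hR : IsResolventAt D lam R)
    (hcpt : IsCompactOperator ⇑(B ∘L R)) :
    IsCompactOperator ⇑(R ∘L M - M ∘L R) := by
  obtain ⟨h1, h2, h3⟩ := hR
  have key : (R ∘L M - M ∘L R) = R ∘L (B ∘L R) := by
    ext y
    have hx : R y ∈ D.domain := h1 y
    have hz : M (R y) ∈ D.domain := hM _ hx
    have hDx : D ⟨R y, hx⟩ = lam • R y - y := by
      have := h2 y hx; linear_combination (norm := module) -this
    have hB' := hB ⟨R y, hx⟩
    have e1 := h3 ⟨M (R y), hz⟩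
    simp only [map_sub, map_smul] at e1
    simp only [coe_sub', Pi.sub_apply, coe_comp', Function.comp_apply]
    rw [hB', hDx]
    simp only [map_sub, map_smul]
    linear_combination (norm := module) e1
  rw [key]
  exact hcpt.clm_comp R
end

section
/- Let D be a self-adjoint operator on a Hilbert space H with 0 an isolated point of its spectrum (no finiteness of ker D assumed). Let P be the orthogonal projection onto ker D and Q = 1 − P. Then for every bounded self-adjoint operator A on H and every real number c, the operator Q(D + cA)Q restricted to ran(Q) is invertible whenever |c|·‖A‖ < ε, where ε > 0 is such that spec(D) ∩ (−ε,ε) ⊆ {0}. -/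
open ContinuousLinearMap

variable {E F : Type*}

/-- A bounded operator is Fredholm if its kernel is finite-dimensional and its range
is closed with finite-dimensional complement (finite-dimensional cokernel). -/
def IsFredholm [NormedAddCommGroup E] [NormedSpace ℂ E] [NormedAddCommGroup F]
    [NormedSpace ℂ F] (T : E →L[ℂ] F) : Prop :=
  FiniteDimensional ℂ (LinearMap.ker (T : E →ₗ[ℂ] F)) ∧ IsClosed (LinearMap.range (T : E →ₗ[ℂ] F) : Set F) ∧
    FiniteDimensional ℂ (F ⧸ LinearMap.range (T : E →ₗ[ℂ] F))

/-- The Fredholm index: `dim ker T - dim coker T`. -/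
noncomputable def fredholmIndex [NormedAddCommGroup E] [NormedSpace ℂ E] [NormedAddCommGroup F]
    [NormedSpace ℂ F] (T : E →L[ℂ] F) : ℤ :=
  (Module.finrank ℂ (LinearMap.ker (T : E →ₗ[ℂ] F)) : ℤ) - (Module.finrank ℂ (F ⧸ LinearMap.range (T : E →ₗ[ℂ] F)) : ℤ)

/-- The compression `P T P` of `T` viewed as an operator on `ran P`. -/
noncomputable def compress [NormedAddCommGroup E] [NormedSpace ℂ E] (P T : E →L[ℂ] E) :
    LinearMap.range (P : E →ₗ[ℂ] E) →L[ℂ] LinearMap.range (P : E →ₗ[ℂ] E) :=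
  ContinuousLinearMap.codRestrict ((P ∘L T) ∘L (Submodule.subtypeL (LinearMap.range (P : E →ₗ[ℂ] E))))
    (LinearMap.range (P : E →ₗ[ℂ] E)) (fun x => LinearMap.mem_range.mpr ⟨T x, rfl⟩)

open scoped InnerProductSpace
set_option maxHeartbeats 1000000

/-- A symmetric bounded-below operator on a complex Hilbert space is a unit. -/
lemma aux_isUnit {K : Type*} [NormedAddCommGroup K] [InnerProductSpace ℂ K] [CompleteSpace K]
    (T : K →L[ℂ] K) (hT : (T : K →ₗ[ℂ] K).IsSymmetric) (k : ℝ) (hk : 0 < k)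
    (hbd : ∀ x, k * ‖x‖ ≤ ‖T x‖) : IsUnit T := by
  have hker : LinearMap.ker (T : K →ₗ[ℂ] K) = ⊥ := by
    rw [LinearMap.ker_eq_bot']
    intro x hx
    have := hbd x
    rw [show T x = 0 from hx, norm_zero] at this
    have : ‖x‖ ≤ 0 := by nlinarith [norm_nonneg x]
    simpa [norm_le_zero_iff] using this
  have hanti : AntilipschitzWith (⟨k, hk.le⟩ : NNReal)⁻¹ T := by
    refine ContinuousLinearMap.antilipschitz_of_bound T ?_
    intro x
    show ‖x‖ ≤ k⁻¹ * ‖T x‖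
    calc ‖x‖ = k⁻¹ * (k * ‖x‖) := by field_simp
    _ ≤ k⁻¹ * ‖T x‖ := by
        exact mul_le_mul_of_nonneg_left (hbd x) (by positivity)
  have hclosed : IsClosed (LinearMap.range (T : K →ₗ[ℂ] K) : Set K) :=
    hanti.isClosed_range T.uniformContinuous
  have hrange : LinearMap.range (T : K →ₗ[ℂ] K) = ⊤ := by
    have horth : (LinearMap.range (T : K →ₗ[ℂ] K))ᗮ = ⊥ := by
      rw [Submodule.eq_bot_iff]
      intro v hv
      have hTv : T v = 0 := by
        have h1 : ⟪T v, T v⟫_ℂ = 0 := by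
          have h2 : ⟪T v, T v⟫_ℂ = ⟪v, T (T v)⟫_ℂ := hT v (T v)
          rw [h2]
          exact (Submodule.mem_orthogonal' _ v).mp hv _ (LinearMap.mem_range_self _ (T v))
        simpa [inner_self_eq_zero] using h1
      have hm : v ∈ LinearMap.ker (T : K →ₗ[ℂ] K) := hTv
      rw [hker] at hm
      simpa using hm
    have h2 : (LinearMap.range (T : K →ₗ[ℂ] K)).topologicalClosure = LinearMap.range (T : K →ₗ[ℂ] K) :=
      SetLike.ext' (by simpa [Submodule.topologicalClosure_coe] using hclosed.closure_eq)
    rw [← h2, ← (LinearMap.range (T : K →ₗ[ℂ] K)).orthogonal_orthogonal_eq_closure, horth,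
      Submodule.bot_orthogonal_eq_top]
  let e := ContinuousLinearEquiv.ofBijective T hker hrange
  refine ⟨⟨T, (e.symm : K →L[ℂ] K), ?_, ?_⟩, rfl⟩
  · ext x
    have h : T (e.symm x) = e (e.symm x) := by
      rw [ContinuousLinearEquiv.coeFn_ofBijective]
    simp [ContinuousLinearMap.mul_apply, h]
  · ext x
    have h : T x = e x := by rw [ContinuousLinearEquiv.coeFn_ofBijective]
    simp [ContinuousLinearMap.mul_apply, h]

/-- Spectral gap: if spec(D) ∩ (-ε,ε) ⊆ {0} then ‖D x‖ ≥ ε ‖x‖ for x ⊥ ker D. -/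
lemma aux_gap {H : Type*} [NormedAddCommGroup H] [InnerProductSpace ℂ H] [CompleteSpace H]
    (D : H →L[ℂ] H) (hsa : IsSelfAdjoint D)
    (ε : ℝ) (hε : 0 < ε)
    (hspec : ∀ μ ∈ spectrum ℝ D, μ ∈ Set.Ioo (-ε) ε → μ = 0)
    (P : H →L[ℂ] H) (hPsa : IsSelfAdjoint P) (hPproj : P ∘L P = P)
    (hPker : LinearMap.range (P : H →ₗ[ℂ] H) = LinearMap.ker (D : H →ₗ[ℂ] H))
    (x : H) (hx : P x = 0) : ε * ‖x‖ ≤ ‖D x‖ := by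
  set f : ℝ → ℝ := fun t => t / max (t ^ 2) (ε ^ 2) with hf
  set h : ℝ → ℝ := fun t => 1 - f t * t with hh
  have hden : ∀ t : ℝ, (0:ℝ) < max (t ^ 2) (ε ^ 2) :=
    fun t => lt_of_lt_of_le (by positivity) (le_max_right _ _)
  have hfc : Continuous f := by
    apply Continuous.div continuous_id (by continuity)
    exact fun t => (hden t).ne'
  have hhc : Continuous h := by
    apply Continuous.sub continuous_const (hfc.mul continuous_id)
  -- h vanishes on nonzero spectrum
  have hhspec : ∀ t ∈ spectrum ℝ D, t ≠ 0 → h t = 0 := by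
    intro t ht htne
    have hbig : ε ^ 2 ≤ t ^ 2 := by
      by_contra hcon
      push_neg at hcon
      have : t ∈ Set.Ioo (-ε) ε := by
        constructor <;> nlinarith [abs_nonneg t, sq_abs t, abs_lt.mp (show |t| < ε by nlinarith [sq_abs t, abs_nonneg t])]
      exact htne (hspec t ht this)
    have hmax : max (t ^ 2) (ε ^ 2) = t ^ 2 := max_eq_left hbig
    simp only [hh, hf, hmax]
    field_simp
    ring
  set R : H →L[ℂ] H := cfc f D with hR
  set E : H →L[ℂ] H := cfc h D with hE
  have hid : cfc (id : ℝ → ℝ) D = D := cfc_id ℝ D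
  have hRD : R * D = 1 - E := by
    calc R * D = cfc f D * cfc (id : ℝ → ℝ) D := by rw [hid]
    _ = cfc (fun t => f t * id t) D :=
        (cfc_mul f id D hfc.continuousOn continuousOn_id).symm
    _ = cfc (fun t => 1 - h t) D := cfc_congr (fun t _ => by simp [hh])
    _ = cfc (fun _ : ℝ => (1:ℝ)) D - cfc h D :=
        cfc_sub (fun _ => (1:ℝ)) h D continuousOn_const hhc.continuousOn
    _ = 1 - E := by rw [cfc_const_one ℝ D]
  have hDE : D * E = 0 := by
    calc D * E = cfc (id : ℝ → ℝ) D * cfc h D := by rw [hid]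
    _ = cfc (fun t => id t * h t) D :=
        (cfc_mul id h D continuousOn_id hhc.continuousOn).symm
    _ = cfc (fun _ : ℝ => (0:ℝ)) D := by
        refine cfc_congr (fun t ht => ?_)
        by_cases htne : t = 0
        · simp [htne]
        · simp [hhspec t ht htne]
    _ = 0 := cfc_const_zero ℝ D
  have hEE : E * E = E := by
    rw [hE, ← cfc_mul h h D hhc.continuousOn hhc.continuousOn]
    refine cfc_congr (fun t ht => ?_)
    by_cases htne : t = 0
    · simp [htne, hh, hf]
    · simp [hhspec t ht htne]
  have hEsa : IsSelfAdjoint E := cfc_predicate h D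
  have hnormR : ‖R‖ ≤ ε⁻¹ := by
    refine norm_cfc_le (by positivity) (fun t _ => ?_)
    rw [Real.norm_eq_abs, hf]
    rw [abs_div, abs_of_pos (hden t)]
    rw [div_le_iff₀ (hden t)]
    rcases le_total (|t|) ε with hle | hle
    · calc |t| ≤ ε := hle
      _ = ε⁻¹ * ε ^ 2 := by field_simp
      _ ≤ ε⁻¹ * max (t ^ 2) (ε ^ 2) := by
          exact mul_le_mul_of_nonneg_left (le_max_right _ _) (by positivity)
    · have : ε * |t| ≤ t ^ 2 := by nlinarith [sq_abs t]
      calc |t| = ε⁻¹ * (ε * |t|) := by field_simp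
      _ ≤ ε⁻¹ * t ^ 2 := mul_le_mul_of_nonneg_left this (by positivity)
      _ ≤ ε⁻¹ * max (t ^ 2) (ε ^ 2) := mul_le_mul_of_nonneg_left (le_max_left _ _) (by positivity)
  -- E x = 0
  have hEx : E x = 0 := by
    have hmem : E x ∈ LinearMap.range (P : H →ₗ[ℂ] H) := by
      rw [hPker]
      have : D (E x) = 0 := by
        have := congrArg (fun S : H →L[ℂ] H => S x) hDE
        simpa [ContinuousLinearMap.mul_apply] using this
      exact this
    obtain ⟨z, hz⟩ := hmem
    have hPEx : P (E x) = E x := by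
      rw [← hz]
      have := congrArg (fun S : H →L[ℂ] H => S z) hPproj
      simpa using this
    have hinner : ⟪E x, E x⟫_ℂ = 0 := by
      have h1 : ⟪E x, E x⟫_ℂ = ⟪x, E (E x)⟫_ℂ := hEsa.isSymmetric x (E x)
      have h2 : E (E x) = E x := by
        have := congrArg (fun S : H →L[ℂ] H => S x) hEE
        simpa [ContinuousLinearMap.mul_apply] using this
      rw [h1, h2, ← hPEx]
      have h3 : ⟪P x, E x⟫_ℂ = ⟪x, P (E x)⟫_ℂ := hPsa.isSymmetric x (E x)
      rw [← h3, hx, inner_zero_left]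
    exact inner_self_eq_zero.mp hinner
  have hRDx : R (D x) = x := by
    have := congrArg (fun S : H →L[ℂ] H => S x) hRD
    simp only [ContinuousLinearMap.mul_apply, ContinuousLinearMap.sub_apply,
      ContinuousLinearMap.one_apply, hEx, sub_zero] at this
    exact this
  calc ε * ‖x‖ = ε * ‖R (D x)‖ := by rw [hRDx]
  _ ≤ ε * (‖R‖ * ‖D x‖) := by
      exact mul_le_mul_of_nonneg_left (R.le_opNorm (D x)) hε.le
  _ ≤ ε * (ε⁻¹ * ‖D x‖) := by
      have := mul_le_mul_of_nonneg_right hnormR (norm_nonneg (D x))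
      exact mul_le_mul_of_nonneg_left this hε.le
  _ = ‖D x‖ := by field_simp

theorem statement13 {H : Type*} [NormedAddCommGroup H] [InnerProductSpace ℂ H] [CompleteSpace H]
    (D : H →L[ℂ] H) (hsa : IsSelfAdjoint D)
    (ε : ℝ) (hε : 0 < ε)
    (hspec : ∀ μ ∈ spectrum ℝ D, μ ∈ Set.Ioo (-ε) ε → μ = 0)
    (P : H →L[ℂ] H) (hPsa : IsSelfAdjoint P) (hPproj : P ∘L P = P)
    (hPker : LinearMap.range (P : H →ₗ[ℂ] H) = LinearMap.ker (D : H →ₗ[ℂ] H))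
    (Q : H →L[ℂ] H) (hQ : Q = 1 - P) :
    ∀ (A : H →L[ℂ] H), IsSelfAdjoint A → ∀ c : ℝ, |c| * ‖A‖ < ε →
      IsUnit (compress Q (D + c • A)) := by
  intro A hA c hc
  have hgap : ∀ x : H, P x = 0 → ε * ‖x‖ ≤ ‖D x‖ := fun x hx =>
    aux_gap D hsa ε hε hspec P hPsa hPproj hPker x hx
  -- basic facts
  have hPmul : P * P = P := hPproj
  have hDP : D * P = 0 := by
    ext z
    have : P z ∈ LinearMap.ker (D : H →ₗ[ℂ] H) := hPker ▸ LinearMap.mem_range_self _ z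
    simpa [ContinuousLinearMap.mul_apply] using this
  have hPD : P * D = 0 := by
    have h1 : star (P * D) = 0 := by
      rw [star_mul, hsa.star_eq, hPsa.star_eq, hDP]
    calc P * D = star (star (P * D)) := (star_star _).symm
    _ = 0 := by rw [h1, star_zero]
  have hQsa : IsSelfAdjoint Q := hQ ▸ (IsSelfAdjoint.one (H →L[ℂ] H)).sub hPsa
  have hQQ : Q * Q = Q := by
    rw [hQ]
    calc (1 - P) * (1 - P) = 1 - P - (P - P * P) := by noncomm_ring
    _ = 1 - P := by rw [hPmul]; abel
  have hQapp : ∀ y : H, Q y = y - P y := by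
    intro y; rw [hQ]; simp
  have hPQ : ∀ y : H, P (Q y) = 0 := by
    intro y
    rw [hQapp]
    have := congrArg (fun S : H →L[ℂ] H => S y) hPproj
    simp only [ContinuousLinearMap.comp_apply] at this
    simp [map_sub, this]
  have hQmem : ∀ y : H, y ∈ LinearMap.range (Q : H →ₗ[ℂ] H) → P y = 0 := by
    rintro y ⟨z, rfl⟩; exact hPQ z
  have hQfix : ∀ y : H, y ∈ LinearMap.range (Q : H →ₗ[ℂ] H) → Q y = y := by
    rintro y ⟨z, rfl⟩
    have := congrArg (fun S : H →L[ℂ] H => S z) hQQ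
    simpa [ContinuousLinearMap.mul_apply] using this
  have hQD : ∀ y : H, Q (D y) = D y := by
    intro y
    rw [hQapp]
    have : P (D y) = 0 := by
      have := congrArg (fun S : H →L[ℂ] H => S y) hPD
      simpa [ContinuousLinearMap.mul_apply] using this
    rw [this, sub_zero]
  have hQnorm : ∀ y : H, ‖Q y‖ ≤ ‖y‖ := by
    intro y
    rcases eq_or_ne (Q y) 0 with h | h
    · simp [h]
    have h1 : (‖Q y‖ : ℝ) ^ 2 = RCLike.re ⟪Q y, Q y⟫_ℂ := by
      rw [inner_self_eq_norm_sq (𝕜 := ℂ)]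
    have h2 : ⟪Q y, Q y⟫_ℂ = ⟪y, Q (Q y)⟫_ℂ := hQsa.isSymmetric y (Q y)
    have h3 : Q (Q y) = Q y := by
      have := congrArg (fun S : H →L[ℂ] H => S y) hQQ
      simpa [ContinuousLinearMap.mul_apply] using this
    have h4 : ‖⟪y, Q y⟫_ℂ‖ ≤ ‖y‖ * ‖Q y‖ := norm_inner_le_norm _ _
    have h5 : RCLike.re ⟪y, Q y⟫_ℂ ≤ ‖y‖ * ‖Q y‖ :=
      le_trans (RCLike.re_le_norm _) h4
    have h6 : ‖Q y‖ ^ 2 ≤ ‖y‖ * ‖Q y‖ := by rw [h1, h2, h3]; exact h5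
    have h7 : 0 < ‖Q y‖ := norm_pos_iff.mpr h
    nlinarith
  -- completeness of range Q
  have hrk : LinearMap.range (Q : H →ₗ[ℂ] H) = LinearMap.ker (P : H →ₗ[ℂ] H) := by
    apply le_antisymm
    · rintro y ⟨z, rfl⟩; exact hPQ z
    · intro y hy
      have hy' : P y = 0 := hy
      exact ⟨y, by show Q y = y; rw [hQapp, hy', sub_zero]⟩
  have hclosed : IsClosed (LinearMap.range (Q : H →ₗ[ℂ] H) : Set H) := by
    rw [hrk]
    exact ContinuousLinearMap.isClosed_ker P
  haveI : CompleteSpace (LinearMap.range (Q : H →ₗ[ℂ] H)) := hclosed.completeSpace_coe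
  have hSsa : IsSelfAdjoint (D + c • A) := by
    have hsym : ((D + c • A) : H →ₗ[ℂ] H).IsSymmetric := by
      intro x y
      show ⟪(D + c • A) x, y⟫_ℂ = ⟪x, (D + c • A) y⟫_ℂ
      simp only [ContinuousLinearMap.add_apply, ContinuousLinearMap.coe_smul', Pi.smul_apply]
      rw [inner_add_left, inner_add_right,
        RCLike.real_smul_eq_coe_smul (K := ℂ) c (A x), RCLike.real_smul_eq_coe_smul (K := ℂ) c (A y),
        inner_smul_left, inner_smul_right]
      have h1 : ⟪D x, y⟫_ℂ = ⟪x, D y⟫_ℂ := hsa.isSymmetric x y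
      have h2 : ⟪A x, y⟫_ℂ = ⟪x, A y⟫_ℂ := hA.isSymmetric x y
      rw [h1, h2]
      simp [Complex.conj_ofReal]
    exact hsym.isSelfAdjoint
  have hTapp : ∀ x : LinearMap.range (Q : H →ₗ[ℂ] H),
      ((compress Q (D + c • A)) x : H) = Q ((D + c • A) (x : H)) := by
    intro x
    simp [compress]
  -- symmetry of T
  have hTsym : ((compress Q (D + c • A)) :
      LinearMap.range (Q : H →ₗ[ℂ] H) →ₗ[ℂ] LinearMap.range (Q : H →ₗ[ℂ] H)).IsSymmetric := by
    intro x y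
    show ⟪((compress Q (D + c • A)) x : H), (y : H)⟫_ℂ
      = ⟪(x : H), ((compress Q (D + c • A)) y : H)⟫_ℂ
    rw [hTapp, hTapp]
    calc ⟪Q ((D + c • A) (x : H)), (y : H)⟫_ℂ = ⟪(D + c • A) (x : H), Q (y : H)⟫_ℂ :=
          hQsa.isSymmetric _ _
    _ = ⟪(D + c • A) (x : H), (y : H)⟫_ℂ := by rw [hQfix _ y.2]
    _ = ⟪(x : H), (D + c • A) (y : H)⟫_ℂ := hSsa.isSymmetric _ _
    _ = ⟪Q (x : H), (D + c • A) (y : H)⟫_ℂ := by rw [hQfix _ x.2]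
    _ = ⟪(x : H), Q ((D + c • A) (y : H))⟫_ℂ := hQsa.isSymmetric _ _
  -- lower bound for T
  have hbd : ∀ x : LinearMap.range (Q : H →ₗ[ℂ] H),
      (ε - |c| * ‖A‖) * ‖x‖ ≤ ‖(compress Q (D + c • A)) x‖ := by
    intro x
    have hxn : ‖x‖ = ‖(x : H)‖ := rfl
    have hPx : P (x : H) = 0 := hQmem _ x.2
    have hTx : ((compress Q (D + c • A)) x : H) = D (x : H) + c • Q (A (x : H)) := by
      rw [hTapp]
      simp only [ContinuousLinearMap.add_apply, ContinuousLinearMap.coe_smul',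
        Pi.smul_apply, map_add]
      rw [hQD, Q.map_smul_of_tower]
    have hnTx : ‖(compress Q (D + c • A)) x‖ = ‖D (x : H) + c • Q (A (x : H))‖ := by
      rw [show ‖(compress Q (D + c • A)) x‖ = ‖((compress Q (D + c • A)) x : H)‖ from rfl, hTx]
    have h1 : ε * ‖(x : H)‖ ≤ ‖D (x : H)‖ := hgap _ hPx
    have h2 : ‖c • Q (A (x : H))‖ ≤ |c| * ‖A‖ * ‖(x : H)‖ := by
      rw [norm_smul, Real.norm_eq_abs]
      calc |c| * ‖Q (A (x : H))‖ ≤ |c| * ‖A (x : H)‖ :=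
            mul_le_mul_of_nonneg_left (hQnorm _) (abs_nonneg c)
      _ ≤ |c| * (‖A‖ * ‖(x : H)‖) :=
            mul_le_mul_of_nonneg_left (A.le_opNorm _) (abs_nonneg c)
      _ = |c| * ‖A‖ * ‖(x : H)‖ := by ring
    have h3 : ‖D (x : H)‖ ≤ ‖D (x : H) + c • Q (A (x : H))‖ + ‖c • Q (A (x : H))‖ := by
      have := norm_add_le (D (x : H) + c • Q (A (x : H))) (-(c • Q (A (x : H))))
      simpa using this
    rw [hnTx, hxn]
    linarith
  exact aux_isUnit _ hTsym (ε - |c| * ‖A‖) (by linarith) hbd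
end
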